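/- arXiv:1407.3158 — 5 statements merged into one kernel-verified Lean document; each statement's English description precedes it below -/
import Mathlib

section
/- If G is a finite group and H is a proper subgroup of G, then there exists a conjugacy class of G that is disjoint from H. Equivalently, the union of all conjugates gHg⁻¹ for g in G is a proper subset of G. -/
/-!
`G` acts transitively on the `[G : H] ≥ 2` cosets of `H`, and `x` fixes the coset `g⁻¹H` exactly
when `g x g⁻¹ ∈ H`. By Burnside's lemma the number of fixed points, averaged over `G`, is the number
of orbits, namely `1`. The identity fixes at least two points, so some element fixes none.
-/

theorem MulAction.exists_forall_smul_ne_of_one_lt_card {G X : Type*} [Group G] [MulAction G X]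
    [Fintype G] [Finite X] [IsPretransitive G X] (hX : 1 < Nat.card X) :
    ∃ g : G, ∀ x : X, g • x ≠ x := by
  classical
  have : Fintype X := Fintype.ofFinite X
  have : Nonempty X := (Nat.card_pos_iff.mp (by omega)).1
  have hΩ : Fintype.card (orbitRel.Quotient G X) = 1 :=
    Fintype.card_eq_one_iff_nonempty_unique.mpr
      ((pretransitive_iff_unique_quotient_of_nonempty G X).mp ‹_›)
  have burnside := sum_card_fixedBy_eq_card_orbits_mul_card_group G X
  rw [hΩ, one_mul] at burnside
  by_contra! h
  have hlt : ∑ _g : G, 1 < ∑ g : G, Fintype.card (fixedBy X g) := by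
    refine Finset.sum_lt_sum (fun g _ ↦ ?_) ⟨1, Finset.mem_univ _, ?_⟩
    · obtain ⟨x, hx⟩ := h g
      exact Fintype.card_pos_iff.mpr ⟨⟨x, hx⟩⟩
    · simpa [fixedBy_one_eq_univ, Nat.card_eq_fintype_card] using hX
  rw [burnside] at hlt
  simp at hlt

theorem QuotientGroup.smul_mk_inv_eq_self_iff {G : Type*} [Group G] (H : Subgroup G) (g x : G) :
    x • ((g⁻¹ : G) : G ⧸ H) = (g⁻¹ : G) ↔ g * x * g⁻¹ ∈ H := by
  rw [MulAction.Quotient.smul_mk, eq_comm, QuotientGroup.eq, inv_inv, smul_eq_mul, mul_assoc]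

/-- **Jordan's lemma.** In a finite group `G`, if `H` is a proper subgroup,
then some conjugacy class of `G` is disjoint from `H`: there is an element
`x ∈ G` none of whose conjugates lies in `H`. -/
theorem jordan_lemma {G : Type*} [Group G] [Fintype G] (H : Subgroup G)
    (hH : H ≠ ⊤) : ∃ x : G, ∀ g : G, g * x * g⁻¹ ∉ H := by
  obtain ⟨x, hx⟩ := MulAction.exists_forall_smul_ne_of_one_lt_card (G := G) (X := G ⧸ H)
    (by rw [← Subgroup.index]; exact Subgroup.one_lt_index_of_ne_top hH)
  exact ⟨x, fun g ↦ (QuotientGroup.smul_mk_inv_eq_self_iff H g x).not.mp (hx _)⟩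
end

section
/- Every transitive subgroup of the symmetric group on d elements, with d ≥ 2, contains a permutation without fixed points. -/
/-- Every transitive subgroup of the symmetric group on `d ≥ 2` elements contains a
permutation without fixed points. -/
theorem transitive_subgroup_contains_derangement (d : ℕ) (hd : 2 ≤ d)
    (H : Subgroup (Equiv.Perm (Fin d)))
    (htrans : ∀ i j : Fin d, ∃ σ ∈ H, σ i = j) :
    ∃ σ ∈ H, ∀ i : Fin d, σ i ≠ i := by
  by_contra hcon
  push_neg at hcon
  haveI : MulAction.IsPretransitive H (Fin d) := by
    constructor
    intro i j
    obtain ⟨σ, hσ, h⟩ := htrans i j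
    exact ⟨⟨σ, hσ⟩, h⟩
  haveI : Nonempty (Fin d) := ⟨⟨0, by omega⟩⟩
  haveI : Fintype ↥H := Fintype.ofFinite _
  haveI : Fintype (Quotient (MulAction.orbitRel (↥H) (Fin d))) := Fintype.ofFinite _
  have hburn := MulAction.sum_card_fixedBy_eq_card_orbits_mul_card_group H (Fin d)
  haveI : Unique (MulAction.orbitRel.Quotient H (Fin d)) :=
    ((MulAction.pretransitive_iff_unique_quotient_of_nonempty H (Fin d)).mp inferInstance).some
  rw [Fintype.card_unique, one_mul] at hburn
  have h1 : ∀ g : H, 1 ≤ Fintype.card (MulAction.fixedBy (Fin d) g) := by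
    intro g
    obtain ⟨i, hi⟩ := hcon g.1 g.2
    exact Fintype.card_pos_iff.mpr ⟨⟨i, hi⟩⟩
  have hid : Fintype.card (MulAction.fixedBy (Fin d) (1 : H)) = d := by
    simp only [MulAction.fixedBy, one_smul, Set.setOf_true]
    rw [Fintype.card_congr (Equiv.Set.univ (Fin d))]
    exact Fintype.card_fin d
  have hmem : (1 : H) ∈ Finset.univ := Finset.mem_univ _
  rw [← Finset.sum_erase_add _ _ hmem] at hburn
  have hle : (Finset.univ.erase (1 : H)).card • 1 ≤
      ∑ g ∈ Finset.univ.erase (1 : H), Fintype.card (MulAction.fixedBy (Fin d) g) :=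
    Finset.card_nsmul_le_sum _ _ _ (fun g _ => h1 g)
  rw [Finset.card_erase_of_mem hmem, Finset.card_univ, smul_eq_mul, mul_one] at hle
  rw [hid] at hburn
  omega
end

section
/- Let A_1, ..., A_N be events on a probability space such that P(A_i) ≤ 1 − ω for each i and P(A_i ∩ A_j) ≤ P(A_i)·P(A_j) + δ for all i ≠ j (for some ω > 0 and δ ≥ 0). Then P(A_1 ∩ ... ∩ A_N) ≤ (1/ω²)(δ + 3/N). -/
/-!
Second-moment method. The number `Y = ∑ᵢ 1_{Aᵢ}` of events that occur equals `N` on `⋂ᵢ Aᵢ`,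
while its mean is at most `N (1 - ω)`; so Chebyshev's inequality bounds `P(⋂ᵢ Aᵢ)` by
`Var Y / (N ω)²`. Expanding `Var Y` into covariances, the off-diagonal ones are at most `δ` by
hypothesis and the diagonal ones are `p (1 - p) ≤ 1 / 4`, so `Var Y ≤ N² δ + N / 4`.
-/

open MeasureTheory

namespace ProbabilityTheory

variable {Ω ι : Type*} [MeasurableSpace Ω] {μ : Measure Ω}

lemma variance_sum_le_of_covariance_le [IsFiniteMeasure μ] [Fintype ι] {X : ι → Ω → ℝ}
    {δ v : ℝ} (hX : ∀ i, MemLp (X i) 2 μ) (hvar : ∀ i, Var[X i; μ] ≤ v)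
    (hcov : ∀ i j, i ≠ j → cov[X i, X j; μ] ≤ δ) :
    Var[∑ i, X i; μ] ≤ Fintype.card ι * (Fintype.card ι - 1) * δ + Fintype.card ι * v := by
  classical
  have hrow : ∀ i, ∑ j, cov[X i, X j; μ] ≤ (Fintype.card ι - 1) * δ + v := by
    intro i
    rw [← Finset.add_sum_erase _ _ (Finset.mem_univ i),
      covariance_self (hX i).aemeasurable, add_comm]
    refine add_le_add ?_ (hvar i)
    calc ∑ j ∈ Finset.univ.erase i, cov[X i, X j; μ]
        ≤ ∑ j ∈ Finset.univ.erase i, δ :=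
          Finset.sum_le_sum fun j hj => hcov i j (Finset.ne_of_mem_erase hj).symm
      _ = (Fintype.card ι - 1) * δ := by
          rw [Finset.sum_const, Finset.card_erase_of_mem (Finset.mem_univ i), nsmul_eq_mul,
            Finset.card_univ, Nat.cast_pred (Fintype.card_pos_iff.mpr ⟨i⟩)]
  calc Var[∑ i, X i; μ] = ∑ i, ∑ j, cov[X i, X j; μ] := variance_sum hX
    _ ≤ ∑ _i : ι, ((Fintype.card ι - 1) * δ + v) := Finset.sum_le_sum fun i _ => hrow i
    _ = Fintype.card ι * (Fintype.card ι - 1) * δ + Fintype.card ι * v := by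
      rw [Finset.sum_const, Finset.card_univ, nsmul_eq_mul]
      ring

lemma measureReal_le_variance_div_sq [IsFiniteMeasure μ] {X : Ω → ℝ} {S : Set Ω} {c : ℝ}
    (hX : MemLp X 2 μ) (hc : 0 < c) (hS : ∀ x ∈ S, c ≤ |X x - μ[X]|) :
    μ.real S ≤ Var[X; μ] / c ^ 2 :=
  ENNReal.toReal_le_of_le_ofReal (by have := variance_nonneg X μ; positivity)
    ((measure_mono hS).trans (meas_ge_le_variance_div_sq hX hc))

lemma memLp_indicator_one [IsFiniteMeasure μ] {A : Set Ω} (hA : MeasurableSet A)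
    (p : ENNReal) : MemLp (A.indicator (1 : Ω → ℝ)) p μ :=
  memLp_indicator_const p hA 1 (Or.inr (measure_ne_top μ A))

variable [IsProbabilityMeasure μ]

lemma covariance_indicator_one {A B : Set Ω} (hA : MeasurableSet A) (hB : MeasurableSet B) :
    cov[A.indicator 1, B.indicator 1; μ] = μ.real (A ∩ B) - μ.real A * μ.real B := by
  rw [covariance_eq_sub (memLp_indicator_one hA 2) (memLp_indicator_one hB 2),
    ← Set.inter_indicator_one, integral_indicator_one (hA.inter hB), integral_indicator_one hA,
    integral_indicator_one hB]

lemma variance_indicator_one_le {A : Set Ω} (hA : MeasurableSet A) :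
    Var[A.indicator 1; μ] ≤ 1 / 4 := by
  rw [← covariance_self (memLp_indicator_one hA 2).aemeasurable, covariance_indicator_one hA hA,
    Set.inter_self]
  nlinarith [sq_nonneg (μ.real A - 1 / 2)]

lemma measureReal_iInter_le_variance_div_sq [Fintype ι] {A : ι → Set Ω}
    (hA : ∀ i, MeasurableSet (A i)) (hpos : 0 < ∑ i, (1 - μ.real (A i))) :
    μ.real (⋂ i, A i) ≤
      Var[∑ i, (A i).indicator 1; μ] / (∑ i, (1 - μ.real (A i))) ^ 2 := by
  refine measureReal_le_variance_div_sq
    (memLp_finsetSum' _ fun i _ => memLp_indicator_one (hA i) 2) hpos fun x hx => le_of_eq ?_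
  have hmem : ∀ i, (A i).indicator (1 : Ω → ℝ) x = 1 :=
    fun i => Set.indicator_of_mem (Set.mem_iInter.mp hx i) _
  simp only [Finset.sum_apply]
  rw [integral_finsetSum _ fun i _ => (memLp_indicator_one (hA i) 1).integrable le_rfl]
  simp only [integral_indicator_one (hA _), hmem, ← Finset.sum_sub_distrib]
  exact (abs_of_pos hpos).symm

end ProbabilityTheory

open ProbabilityTheory

theorem pairwise_sieve_bound_general {Ω : Type*} [MeasurableSpace Ω]
    (μ : Measure Ω) [IsProbabilityMeasure μ]
    (N : ℕ) (hN : 1 ≤ N) (A : Fin N → Set Ω) (hAmeas : ∀ i, MeasurableSet (A i))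
    (ω δ : ℝ) (hω : 0 < ω) (hδ : 0 ≤ δ)
    (hbound : ∀ i, (μ (A i)).toReal ≤ 1 - ω)
    (hpair : ∀ i j, i ≠ j →
      (μ (A i ∩ A j)).toReal ≤ (μ (A i)).toReal * (μ (A j)).toReal + δ) :
    (μ (⋂ i, A i)).toReal ≤ (1 / ω ^ 2) * (δ + 3 / N) := by
  have hN₁ : (1 : ℝ) ≤ N := by exact_mod_cast hN
  have hmass : N * ω ≤ ∑ i, (1 - μ.real (A i)) :=
    calc N * ω = ∑ _i : Fin N, ω := by simp
      _ ≤ ∑ i, (1 - μ.real (A i)) := Finset.sum_le_sum fun i _ => le_sub_comm.mp (hbound i)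
  have hvar : Var[∑ i, (A i).indicator 1; μ] ≤ N ^ 2 * δ + 3 * N := by
    have := variance_sum_le_of_covariance_le (fun i => memLp_indicator_one (μ := μ) (hAmeas i) 2)
      (fun i => variance_indicator_one_le (hAmeas i)) fun i j hij => by
        rw [covariance_indicator_one (hAmeas i) (hAmeas j)]
        exact sub_le_iff_le_add'.mpr (hpair i j hij)
    simp only [Fintype.card_fin] at this
    nlinarith
  calc μ.real (⋂ i, A i)
      ≤ Var[∑ i, (A i).indicator 1; μ] / (∑ i, (1 - μ.real (A i))) ^ 2 :=
        measureReal_iInter_le_variance_div_sq hAmeas ((mul_pos (by linarith) hω).trans_le hmass)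
    _ ≤ (N ^ 2 * δ + 3 * N) / (N * ω) ^ 2 := by gcongr
    _ = (1 / ω ^ 2) * (δ + 3 / N) := by field_simp

/-- **Pairwise almost-independence sieve bound.** If `A₁, …, A_N` are events with
`P(Aᵢ) ≤ 1 − ω` for each `i` and `P(Aᵢ ∩ Aⱼ) ≤ P(Aᵢ)·P(Aⱼ) + δ` for `i ≠ j`, then
`P(A₁ ∩ ⋯ ∩ A_N) ≤ (1/ω²)(δ + 3/N)`. -/
theorem pairwise_sieve_bound {Ω : Type*} [MeasurableSpace Ω]
    (μ : Measure Ω) [IsProbabilityMeasure μ]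
    (N : ℕ) (hN : 1 ≤ N) (A : Fin N → Set Ω) (hAmeas : ∀ i, MeasurableSet (A i))
    (ω δ : ℝ) (hω : 0 < ω) (hω1 : ω ≤ 1) (hδ : 0 ≤ δ)
    (hbound : ∀ i, (μ (A i)).toReal ≤ 1 - ω)
    (hpair : ∀ i j, i ≠ j →
      (μ (A i ∩ A j)).toReal ≤ (μ (A i)).toReal * (μ (A j)).toReal + δ) :
    (μ (⋂ i, A i)).toReal ≤ (1 / ω ^ 2) * (δ + 3 / N) :=
  pairwise_sieve_bound_general μ N hN A hAmeas ω δ hω hδ hbound hpair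
end

section
/- Let μ be a symmetric probability measure on a finite group G and H ≤ G a subgroup. Then the sequence n ↦ μ^(2n)(H) is non-increasing in n. -/
variable {G : Type*}

/-- Convolution of two functions on a finite group. -/
noncomputable def conv [Group G] [Fintype G] (μ ν : G → ℝ) : G → ℝ :=
  fun g => ∑ x : G, μ (g * x⁻¹) * ν x

/-- `n`-fold convolution power of a function on a finite group
(`convPow μ 0` is the Dirac mass at the identity). -/
noncomputable def convPow [Group G] [Fintype G] [DecidableEq G] (μ : G → ℝ) : ℕ → G → ℝ
  | 0 => fun g => if g = 1 then 1 else 0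
  | n + 1 => conv μ (convPow μ n)

section Aux

variable [Group G] [Fintype G] [DecidableEq G]

lemma conv_assoc (a b c : G → ℝ) : conv (conv a b) c = conv a (conv b c) := by
  funext g
  simp only [conv, Finset.mul_sum, Finset.sum_mul]
  conv_rhs => rw [Finset.sum_comm]
  refine Finset.sum_congr rfl fun x _ => ?_
  rw [← Equiv.sum_comp (Equiv.mulRight x) fun u => a (g * u⁻¹) * (b (u * x⁻¹) * c x)]
  refine Finset.sum_congr rfl fun y _ => ?_
  simp only [Equiv.coe_mulRight, mul_inv_rev, mul_inv_cancel_right]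
  rw [← mul_assoc g]
  ring

lemma conv_dirac (a : G → ℝ) : conv a (fun g => if g = 1 then 1 else 0) = a := by
  funext g
  simp only [conv, mul_ite, mul_one, mul_zero]
  rw [Finset.sum_ite_eq' Finset.univ (1 : G) (fun x => a (g * x⁻¹))]
  simp

lemma dirac_conv (a : G → ℝ) : conv (fun g => if g = 1 then 1 else 0) a = a := by
  funext g
  simp only [conv, ite_mul, one_mul, zero_mul, mul_inv_eq_one]
  rw [Finset.sum_ite_eq Finset.univ g a]
  simp

lemma convPow_add (μ : G → ℝ) (m n : ℕ) :
    convPow μ (m + n) = conv (convPow μ m) (convPow μ n) := by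
  induction m with
  | zero =>
      rw [Nat.zero_add]
      rw [show convPow μ 0 = (fun g : G => if g = 1 then 1 else 0) from rfl, dirac_conv]
  | succ k ih =>
      rw [Nat.succ_add]
      show conv μ (convPow μ (k + n)) = conv (conv μ (convPow μ k)) (convPow μ n)
      rw [ih, conv_assoc]

lemma convPow_one (μ : G → ℝ) : convPow μ 1 = μ := by
  show conv μ (convPow μ 0) = μ
  rw [show convPow μ 0 = (fun g : G => if g = 1 then 1 else 0) from rfl, conv_dirac]

lemma conv_symm_apply {a b : G → ℝ} (ha : ∀ x, a x⁻¹ = a x) (hb : ∀ x, b x⁻¹ = b x) (g : G) :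
    conv a b g⁻¹ = conv b a g := by
  show ∑ x : G, a (g⁻¹ * x⁻¹) * b x = ∑ x : G, b (g * x⁻¹) * a x
  rw [← Equiv.sum_comp (Equiv.mulRight g⁻¹) fun x => a (g⁻¹ * x⁻¹) * b x]
  refine Finset.sum_congr rfl fun y _ => ?_
  simp only [Equiv.coe_mulRight, mul_inv_rev, inv_inv, inv_mul_cancel_left]
  rw [ha, ← hb (y * g⁻¹)]
  simp only [mul_inv_rev, inv_inv]
  ring

lemma convPow_symm (μ : G → ℝ) (hsymm : ∀ x : G, μ x⁻¹ = μ x) :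
    ∀ n (g : G), convPow μ n g⁻¹ = convPow μ n g := by
  intro n
  induction n with
  | zero => intro g; simp [convPow, inv_eq_one]
  | succ k ih =>
      intro g
      calc convPow μ (k + 1) g⁻¹ = conv μ (convPow μ k) g⁻¹ := rfl
        _ = conv (convPow μ k) μ g := conv_symm_apply hsymm ih g
        _ = convPow μ (k + 1) g := by
            have h := congrFun (convPow_add μ k 1) g
            rw [convPow_one] at h
            exact h.symm

lemma convPow_nonneg (μ : G → ℝ) (hnn : ∀ x, 0 ≤ μ x) :
    ∀ n (g : G), 0 ≤ convPow μ n g := by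
  intro n
  induction n with
  | zero => intro g; dsimp [convPow]; positivity
  | succ k ih =>
      intro g
      exact Finset.sum_nonneg fun x _ => mul_nonneg (hnn _) (ih x)

lemma sum_mul_right_inv (μ : G → ℝ) (z : G) : ∑ x : G, μ (x * z⁻¹) = ∑ x : G, μ x :=
  Equiv.sum_comp (Equiv.mulRight z⁻¹) μ

lemma sum_left_mul_inv (μ : G → ℝ) (x : G) : ∑ z : G, μ (x * z⁻¹) = ∑ z : G, μ z :=
  Equiv.sum_comp (((Equiv.inv G)).trans (Equiv.mulLeft x)) μ

/-- ℓ² contraction: convolving with a probability measure does not increase the ℓ² norm. -/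
lemma conv_sq_sum_le (μ : G → ℝ) (hnn : ∀ x, 0 ≤ μ x) (hsum : ∑ x : G, μ x = 1)
    (Ψ : G → ℝ) : ∑ x : G, (conv μ Ψ x) ^ 2 ≤ ∑ x : G, (Ψ x) ^ 2 := by
  have key : ∀ x : G, (conv μ Ψ x) ^ 2 ≤ ∑ z : G, μ (x * z⁻¹) * (Ψ z) ^ 2 := by
    intro x
    have h := Finset.sum_sq_le_sum_mul_sum_of_sq_eq_mul Finset.univ
      (r := fun z => μ (x * z⁻¹) * Ψ z) (f := fun z => μ (x * z⁻¹))
      (g := fun z => μ (x * z⁻¹) * (Ψ z) ^ 2)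
      (fun i _ => hnn _) (fun i _ => mul_nonneg (hnn _) (sq_nonneg _))
      (fun i _ => by ring)
    calc (conv μ Ψ x) ^ 2 = (∑ z : G, μ (x * z⁻¹) * Ψ z) ^ 2 := rfl
      _ ≤ (∑ z : G, μ (x * z⁻¹)) * ∑ z : G, μ (x * z⁻¹) * (Ψ z) ^ 2 := h
      _ = ∑ z : G, μ (x * z⁻¹) * (Ψ z) ^ 2 := by
          rw [sum_left_mul_inv, hsum, one_mul]
  calc ∑ x : G, (conv μ Ψ x) ^ 2 ≤ ∑ x : G, ∑ z : G, μ (x * z⁻¹) * (Ψ z) ^ 2 :=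
        Finset.sum_le_sum fun x _ => key x
    _ = ∑ z : G, (∑ x : G, μ (x * z⁻¹)) * (Ψ z) ^ 2 := by
        rw [Finset.sum_comm]
        exact Finset.sum_congr rfl fun z _ => by rw [Finset.sum_mul]
    _ = ∑ z : G, (Ψ z) ^ 2 := by
        refine Finset.sum_congr rfl fun z _ => ?_
        rw [sum_mul_right_inv, hsum, one_mul]

variable (μ : G → ℝ) (H : Subgroup G) [DecidablePred (· ∈ H)]

/-- The coset-sum function is right-`H`-invariant. -/
lemma psi_right_inv (n : ℕ) (y : G) (h : H) :
    ∑ k : H, convPow μ n (y * (h : G)⁻¹ * (k : G)) = ∑ k : H, convPow μ n (y * (k : G)) := by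
  rw [← Equiv.sum_comp (Equiv.mulLeft h) fun k : H => convPow μ n (y * (h : G)⁻¹ * (k : G))]
  refine Finset.sum_congr rfl fun k _ => ?_
  simp only [Equiv.coe_mulLeft, Subgroup.coe_mul]
  rw [← mul_assoc, inv_mul_cancel_right]

/-- Recursion for the coset-sum function: it evolves by convolution with `μ`. -/
lemma psi_succ (n : ℕ) :
    (fun x : G => ∑ h : H, convPow μ (n + 1) (x * (h : G))) =
      conv μ (fun x : G => ∑ h : H, convPow μ n (x * (h : G))) := by
  funext x
  show ∑ h : H, conv μ (convPow μ n) (x * (h : G)) =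
    ∑ z : G, μ (x * z⁻¹) * ∑ h : H, convPow μ n (z * (h : G))
  simp only [conv, Finset.mul_sum]
  conv_rhs => rw [Finset.sum_comm]
  refine Finset.sum_congr rfl fun h _ => ?_
  rw [← Equiv.sum_comp (Equiv.mulRight ((h : G))⁻¹)
    fun z => μ (x * z⁻¹) * convPow μ n (z * (h : G))]
  refine Finset.sum_congr rfl fun w _ => ?_
  simp only [Equiv.coe_mulRight, mul_inv_rev, inv_inv, inv_mul_cancel_right, ← mul_assoc]

/-- Key identity: `|H| · μ^(2n)(H) = ∑_x Ψ_n(x)²` where `Ψ_n(x) = ∑_{h∈H} μ^n(xh)`. -/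
lemma card_mul_sum_eq_sum_sq (hsymm : ∀ x : G, μ x⁻¹ = μ x) (n : ℕ) :
    (Fintype.card H : ℝ) * (∑ h : H, convPow μ (2 * n) (h : G)) =
      ∑ x : G, (∑ h : H, convPow μ n (x * (h : G))) ^ 2 := by
  have h2n : convPow μ (2 * n) = conv (convPow μ n) (convPow μ n) := by
    rw [two_mul, convPow_add]
  have key1 : ∀ x : G, (∑ h : H, convPow μ n ((h : G) * x⁻¹)) =
      ∑ h : H, convPow μ n (x * (h : G)) := by
    intro x
    have e1 : ∀ h : H, convPow μ n ((h : G) * x⁻¹) = convPow μ n (x * (h : G)⁻¹) := by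
      intro h
      rw [← convPow_symm μ hsymm n ((h : G) * x⁻¹)]
      congr 1
      simp [mul_inv_rev]
    simp_rw [e1]
    rw [← Equiv.sum_comp (Equiv.inv H) fun h : H => convPow μ n (x * (h : G))]
    simp
  have idI : (∑ h : H, convPow μ (2 * n) (h : G)) =
      ∑ x : G, (∑ h : H, convPow μ n (x * (h : G))) * convPow μ n x := by
    calc ∑ h : H, convPow μ (2 * n) (h : G)
        = ∑ h : H, ∑ x : G, convPow μ n ((h : G) * x⁻¹) * convPow μ n x := by
          refine Finset.sum_congr rfl fun h _ => ?_
          rw [h2n]; rfl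
      _ = ∑ x : G, (∑ h : H, convPow μ n ((h : G) * x⁻¹)) * convPow μ n x := by
          rw [Finset.sum_comm]
          exact Finset.sum_congr rfl fun x _ => (Finset.sum_mul _ _ _).symm
      _ = _ := Finset.sum_congr rfl fun x _ => by rw [key1]
  have e2 : ∑ x : G, (∑ h : H, convPow μ n (x * (h : G))) ^ 2 =
      (Fintype.card H : ℝ) *
        ∑ x : G, (∑ h : H, convPow μ n (x * (h : G))) * convPow μ n x := by
    calc ∑ x : G, (∑ h : H, convPow μ n (x * (h : G))) ^ 2
        = ∑ x : G, ∑ h : H,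
            (∑ k : H, convPow μ n (x * (k : G))) * convPow μ n (x * (h : G)) := by
          refine Finset.sum_congr rfl fun x _ => ?_
          rw [sq, Finset.mul_sum]
      _ = ∑ h : H, ∑ x : G,
            (∑ k : H, convPow μ n (x * (k : G))) * convPow μ n (x * (h : G)) :=
          Finset.sum_comm
      _ = ∑ _h : H, ∑ y : G,
            (∑ k : H, convPow μ n (y * (k : G))) * convPow μ n y := by
          refine Finset.sum_congr rfl fun h _ => ?_
          refine Fintype.sum_equiv (Equiv.mulRight ((h : G))) _ _ fun x => ?_
          simp only [Equiv.coe_mulRight]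
          congr 1
          have h1 := psi_right_inv μ H n (x * (h : G)) h
          rw [mul_inv_cancel_right] at h1
          exact h1
      _ = (Fintype.card H : ℝ) *
            ∑ y : G, (∑ k : H, convPow μ n (y * (k : G))) * convPow μ n y := by
          rw [Finset.sum_const, Finset.card_univ, nsmul_eq_mul]
  rw [idI, e2]

end Aux

/-- For a symmetric probability measure `μ` on a finite group and a subgroup `H`,
the sequence `n ↦ μ^(2n)(H)` is non-increasing. -/
theorem convPow_two_mul_subgroup_antitone [Group G] [Fintype G] [DecidableEq G]
    (μ : G → ℝ) (hnn : ∀ x, 0 ≤ μ x) (hsum : ∑ x : G, μ x = 1)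
    (hsymm : ∀ x : G, μ x⁻¹ = μ x) (H : Subgroup G) [DecidablePred (· ∈ H)] :
    Antitone (fun n : ℕ => ∑ h : H, convPow μ (2 * n) (h : G)) := by
  apply antitone_nat_of_succ_le
  intro n
  have hcard : (0 : ℝ) < (Fintype.card H : ℝ) := by
    exact_mod_cast Fintype.card_pos
  have key : (Fintype.card H : ℝ) * (∑ h : H, convPow μ (2 * (n + 1)) (h : G)) ≤
      (Fintype.card H : ℝ) * (∑ h : H, convPow μ (2 * n) (h : G)) := by
    rw [card_mul_sum_eq_sum_sq μ H hsymm, card_mul_sum_eq_sum_sq μ H hsymm]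
    have e : ∀ x : G, ∑ h : H, convPow μ (n + 1) (x * (h : G)) =
        conv μ (fun x : G => ∑ h : H, convPow μ n (x * (h : G))) x :=
      fun x => congrFun (psi_succ μ H n) x
    simp_rw [e]
    exact conv_sq_sum_le μ hnn hsum _
  exact le_of_mul_le_mul_left key hcard
end

section
/- Suppose G is a finite group such that every nontrivial complex representation of G has dimension at least |G|^β for some β > 0, and suppose μ is a symmetric probability measure on G with μ^n(1) ≤ |G|^(−(1−β/2)) for some even integer n. Then every eigenvalue α ≠ 1 of the convolution operator T_μ on ℓ²(G) satisfies α^n ≤ |G|^(−β/2), hence |α| ≤ |G|^(−β/(2n)). -/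
variable {G : Type*}

/-!
Complexify `T_μ`. Right translations commute with the left convolution `T_μ`, so the
`α`-eigenspace `E` is a representation of `G`. It is nontrivial: a vector fixed by all right
translations is constant, and constants have eigenvalue `∑ μ = 1 ≠ α`. Hence
`dim E ≥ |G| ^ β`. Since `T_μ` is self-adjoint and `n = 2k`, Bessel's inequality for the rows of
`T_μ ^ k` against an orthonormal basis of `E` gives
`dim E * α ^ n ≤ ‖T_μ ^ k‖²_F = tr T_μ ^ n = |G| μ^n(1) ≤ |G| ^ (β / 2)`.
-/

open Matrix Module

section EigenspaceTrace

variable {𝕜 n : Type*} [RCLike 𝕜] [Fintype n]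

theorem Matrix.re_trace_conjTranspose_mul_self {m : Type*} [Fintype m] (B : Matrix m n 𝕜) :
    RCLike.re (Bᴴ * B).trace = ∑ x, ∑ y, ‖B x y‖ ^ 2 := by
  simp only [trace, diag, mul_apply, conjTranspose_apply, RCLike.star_def, RCLike.conj_mul,
    map_sum]
  simp_rw [← RCLike.ofReal_pow, RCLike.ofReal_re]
  exact Finset.sum_comm

variable [DecidableEq n]

theorem Matrix.sum_norm_sq_toEuclideanLin_le {ι m : Type*} [Fintype ι] [Fintype m]
    (B : Matrix m n 𝕜) {v : ι → EuclideanSpace 𝕜 n} (hv : Orthonormal 𝕜 v) :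
    ∑ i, ‖toEuclideanLin B (v i)‖ ^ 2 ≤ ∑ x, ∑ y, ‖B x y‖ ^ 2 := by
  let row (x : m) : EuclideanSpace 𝕜 n := WithLp.toLp 2 (star (B x))
  have inner_row (i : ι) (x : m) : inner 𝕜 (v i) (row x) = star ((B *ᵥ v i) x) := by
    simp [row, PiLp.inner_apply, mulVec, dotProduct, star_sum]
  calc ∑ i, ‖toEuclideanLin B (v i)‖ ^ 2 = ∑ x, ∑ i, ‖inner 𝕜 (v i) (row x)‖ ^ 2 := by
        simp_rw [EuclideanSpace.norm_sq_eq, inner_row, norm_star]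
        exact Finset.sum_comm
    _ ≤ ∑ x, ‖row x‖ ^ 2 := Finset.sum_le_sum fun x _ => hv.sum_inner_products_le (row x)
    _ = ∑ x, ∑ y, ‖B x y‖ ^ 2 := by simp [row, EuclideanSpace.norm_sq_eq]

theorem Matrix.IsHermitian.finrank_eigenspace_mul_le_re_trace_pow {A : Matrix n n 𝕜}
    (hA : A.IsHermitian) (a : 𝕜) (k : ℕ) :
    finrank 𝕜 (End.eigenspace (toEuclideanLin A) a) * ‖a‖ ^ (2 * k) ≤
      RCLike.re (A ^ (2 * k)).trace := by
  set E := End.eigenspace (toEuclideanLin A) a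
  let b := stdOrthonormalBasis 𝕜 E
  let v i : EuclideanSpace 𝕜 n := b i
  have hv : Orthonormal 𝕜 v := b.orthonormal.comp_linearIsometry E.subtypeₗᵢ
  have hAk_v (i) : toEuclideanLin (A ^ k) (v i) = a ^ k • v i := by
    rw [toLpLin_pow]
    exact End.HasEigenvector.pow_apply ⟨(b i).2, hv.ne_zero i⟩ k
  calc finrank 𝕜 E * ‖a‖ ^ (2 * k) = ∑ i, ‖toEuclideanLin (A ^ k) (v i)‖ ^ 2 := by
        simp only [hAk_v, norm_smul, norm_pow, hv.1, mul_one, Finset.sum_const, Finset.card_univ,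
          Fintype.card_fin, nsmul_eq_mul, pow_mul']
    _ ≤ ∑ x, ∑ y, ‖(A ^ k) x y‖ ^ 2 := sum_norm_sq_toEuclideanLin_le _ hv
    _ = RCLike.re (A ^ (2 * k)).trace := by
        rw [← re_trace_conjTranspose_mul_self, (hA.pow k).eq, ← pow_add, two_mul]

theorem Matrix.re_trace_map_ofReal_pow (M : Matrix n n ℝ) (k : ℕ) :
    RCLike.re ((M.map (algebraMap ℝ 𝕜)) ^ k).trace = (M ^ k).trace := by
  rw [← Matrix.map_pow M (algebraMap ℝ 𝕜)]
  simp [trace]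

theorem Matrix.ofReal_mem_eigenspace_toEuclideanLin_map {M : Matrix n n ℝ} {v : n → ℝ} {a : ℝ}
    (h : M *ᵥ v = a • v) :
    WithLp.toLp 2 (fun i => (v i : 𝕜)) ∈
      End.eigenspace (toEuclideanLin (M.map (algebraMap ℝ 𝕜))) (a : 𝕜) := by
  rw [End.mem_eigenspace_iff]
  ext i
  simpa [RingHom.map_mulVec, Function.comp_def] using congrArg (algebraMap ℝ 𝕜) (congrFun h i)

end EigenspaceTrace

theorem Representation.le_finrank_of_ne_one {k : Type} {G V : Type*} [Field k] [Monoid G]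
    [AddCommGroup V] [Module k V] [FiniteDimensional k V] {b : ℝ}
    (h : ∀ (W : Type) [AddCommGroup W] [Module k W] [FiniteDimensional k W]
      (σ : Representation k G W), σ ≠ 1 → b ≤ finrank k W)
    (ρ : Representation k G V) (hρ : ρ ≠ 1) : b ≤ finrank k V := by
  let e := (finBasis k V).equivFun
  let σ : Representation k G (Fin (finrank k V) → k) := e.conjRingEquiv.toMonoidHom.comp ρ
  have hσ : σ ≠ 1 := fun hσ1 => hρ <| MonoidHom.ext fun g =>
    e.conjRingEquiv.injective <| by simpa [σ] using DFunLike.congr_fun hσ1 g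
  simpa using h _ σ hσ

section ConvolutionMatrix

variable [Group G]

def convMatrix {R : Type*} (c : G → R) : Matrix G G R := Matrix.of fun x y => c (x * y⁻¹)

theorem isHermitian_convMatrix {R : Type*} [Star R] {c : G → R} (hc : ∀ x, c x⁻¹ = star (c x)) :
    (convMatrix c).IsHermitian := by
  ext x y
  simp [convMatrix, ← hc]

variable [Fintype G]

theorem convMatrix_pow_apply [DecidableEq G] (μ : G → ℝ) (k : ℕ) (x y : G) :
    (convMatrix μ ^ k) x y = convPow μ k (x * y⁻¹) := by
  induction k generalizing x y with
  | zero => simp [convPow, one_apply, mul_inv_eq_one]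
  | succ k ih =>
    rw [pow_succ', mul_apply, convPow, conv]
    refine Fintype.sum_equiv (Equiv.mulRight y⁻¹) _ _ fun z => ?_
    rw [ih]
    simp [convMatrix, mul_assoc]

theorem trace_convMatrix_pow [DecidableEq G] (μ : G → ℝ) (k : ℕ) :
    (convMatrix μ ^ k).trace = Fintype.card G * convPow μ k 1 := by
  simp only [trace, diag, convMatrix_pow_apply, mul_inv_cancel, Finset.sum_const,
    Finset.card_univ, nsmul_eq_mul]

theorem convMatrix_mulVec_const {R : Type*} [NonUnitalNonAssocSemiring R] (c : G → R)
    (b : R) :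
    convMatrix c *ᵥ (fun _ => b) = fun _ => (∑ y, c y) * b := by
  ext x
  simp only [mulVec, dotProduct, convMatrix, of_apply, ← Finset.sum_mul, ← div_eq_mul_inv]
  exact congrArg (· * b) ((Equiv.divLeft x).sum_comp c)

end ConvolutionMatrix

section RightRegular

variable (𝕜 : Type*) [RCLike 𝕜] [Group G]

def rightRegular : Representation 𝕜 G (EuclideanSpace 𝕜 G) where
  toFun g :=
    { toFun f := WithLp.toLp 2 fun x => f (x * g)
      map_add' _ _ := rfl
      map_smul' _ _ := rfl }
  map_one' := by ext; simp
  map_mul' g h := by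
    ext f x
    exact congrArg f (mul_assoc x g h).symm

variable {𝕜}

@[simp]
theorem rightRegular_apply (g : G) (f : EuclideanSpace 𝕜 G) (x : G) :
    rightRegular 𝕜 g f x = f (x * g) :=
  rfl

variable [Fintype G] [DecidableEq G]

theorem commute_toEuclideanLin_convMatrix_rightRegular (c : G → 𝕜) (g : G) :
    Commute (toEuclideanLin (convMatrix c)) (rightRegular 𝕜 g) := by
  ext f x
  simp only [Module.End.mul_apply, rightRegular_apply, ofLp_toLpLin, toLin'_apply, mulVec,
    dotProduct, convMatrix, of_apply]
  exact Fintype.sum_equiv (Equiv.mulRight g) _ _ fun y => by simp [mul_assoc]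

def eigenSubrepresentation (c : G → 𝕜) (a : 𝕜) : Subrepresentation (rightRegular 𝕜 (G := G)) where
  toSubmodule := End.eigenspace (toEuclideanLin (convMatrix c)) a
  apply_mem_toSubmodule g :=
    End.mapsTo_genEigenspace_of_comm (commute_toEuclideanLin_convMatrix_rightRegular c g) a 1

theorem eigenSubrepresentation_toRepresentation_ne_one {c : G → 𝕜} {a : 𝕜} (ha : a ≠ ∑ x, c x)
    (hE : End.eigenspace (toEuclideanLin (convMatrix c)) a ≠ ⊥) :
    (eigenSubrepresentation c a).toRepresentation ≠ 1 := by
  obtain ⟨f, hfE, hf0⟩ := (Submodule.ne_bot_iff _).mp hE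
  intro htriv
  have hconst (x : G) : f x = f 1 := by
    have hfix : rightRegular 𝕜 x f = f :=
      congrArg Subtype.val (LinearMap.congr_fun (DFunLike.congr_fun htriv x) ⟨f, hfE⟩)
    simpa using congrFun (congrArg WithLp.ofLp hfix) 1
  have hf1 : f 1 ≠ 0 := fun h => hf0 (by ext x; simp [hconst x, h])
  have heig := congrFun (congrArg WithLp.ofLp (End.mem_eigenspace_iff.mp hfE)) 1
  rw [ofLp_toLpLin, toLin'_apply, show f.ofLp = fun _ => f 1 from funext hconst,
    convMatrix_mulVec_const] at heig
  exact ha (mul_right_cancel₀ hf1 heig).symm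

end RightRegular

theorem abs_le_rpow_inv_of_pow_le {x y : ℝ} {n : ℕ} (hn : Even n) (hn0 : n ≠ 0) (h : x ^ n ≤ y) :
    |x| ≤ y ^ (n⁻¹ : ℝ) := by
  have hy : 0 ≤ y := (hn.pow_nonneg x).trans h
  rw [Real.le_rpow_inv_iff_of_pos (abs_nonneg x) hy (by positivity), Real.rpow_natCast,
    hn.pow_abs]
  exact h

theorem le_rpow_neg_half_of_rpow_mul_le {c β m t : ℝ} (hc : 0 < c) (ht : 0 ≤ t)
    (hm : c ^ β ≤ m) (h : m * t ≤ c * c ^ (-(1 - β / 2))) : t ≤ c ^ (-(β / 2)) :=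
  calc t = c ^ (-β) * (c ^ β * t) := by
        rw [← mul_assoc, ← Real.rpow_add hc, neg_add_cancel, Real.rpow_zero, one_mul]
    _ ≤ c ^ (-β) * (c * c ^ (-(1 - β / 2))) :=
        mul_le_mul_of_nonneg_left ((mul_le_mul_of_nonneg_right hm ht).trans h) (by positivity)
    _ = c ^ (-(β / 2)) := by
        rw [mul_comm c, ← Real.rpow_add_one hc.ne', ← Real.rpow_add hc]
        ring_nf

theorem spectral_gap_from_quasirandomness_general [Group G] [Fintype G] [DecidableEq G]
    (β : ℝ)
    (hrep : ∀ (V : Type) [AddCommGroup V] [Module ℂ V] [FiniteDimensional ℂ V]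
      (ρ : Representation ℂ G V), ρ ≠ 1 →
        (Fintype.card G : ℝ) ^ β ≤ (Module.finrank ℂ V : ℝ))
    (μ : G → ℝ) (hsum : ∑ x : G, μ x = 1)
    (hsymm : ∀ x : G, μ x⁻¹ = μ x)
    (n : ℕ) (hn : 1 ≤ n) (hneven : Even n)
    (hreturn : convPow μ n 1 ≤ (Fintype.card G : ℝ) ^ (-(1 - β / 2)))
    (M : Matrix G G ℝ) (hM : M = fun x y => μ (x * y⁻¹))
    (α : ℝ) (hα : α ≠ 1)
    (heig : ∃ f : G → ℝ, f ≠ 0 ∧ M.mulVec f = α • f) :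
    α ^ n ≤ (Fintype.card G : ℝ) ^ (-(β / 2)) ∧
      |α| ≤ (Fintype.card G : ℝ) ^ (-(β / (2 * n))) := by
  obtain ⟨f, hf0, hf⟩ := heig
  obtain ⟨k, rfl⟩ := hneven.two_dvd
  set c : ℝ := (Fintype.card G : ℝ)
  have hc : 0 < c := Nat.cast_pos.mpr Fintype.card_pos
  set A : Matrix G G ℂ := (convMatrix μ).map (algebraMap ℝ ℂ)
  set E := End.eigenspace (toEuclideanLin A) (α : ℂ)
  have hfE : WithLp.toLp 2 (fun x => (f x : ℂ)) ∈ E :=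
    ofReal_mem_eigenspace_toEuclideanLin_map (by rwa [hM] at hf)
  have hE : E ≠ ⊥ := (Submodule.ne_bot_iff E).mpr ⟨_, hfE, fun h0 => hf0 <| funext fun x => by
    simpa using congrFun (congrArg WithLp.ofLp h0) x⟩
  have hdim : c ^ β ≤ finrank ℂ E := by
    refine Representation.le_finrank_of_ne_one hrep _
      (eigenSubrepresentation_toRepresentation_ne_one (c := fun x => (μ x : ℂ)) ?_ hE)
    rw [← Complex.ofReal_sum, hsum]
    exact_mod_cast hα
  have htrace : finrank ℂ E * α ^ (2 * k) ≤ c * convPow μ (2 * k) 1 := by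
    have hA : A.IsHermitian := isHermitian_convMatrix (c := fun x => (μ x : ℂ)) fun x => by
      simp [hsymm]
    have := hA.finrank_eigenspace_mul_le_re_trace_pow (α : ℂ) k
    rwa [re_trace_map_ofReal_pow, trace_convMatrix_pow, Complex.norm_real, Real.norm_eq_abs,
      (even_two_mul k).pow_abs] at this
  have hpow : α ^ (2 * k) ≤ c ^ (-(β / 2)) :=
    le_rpow_neg_half_of_rpow_mul_le hc ((even_two_mul k).pow_nonneg α) hdim
      (htrace.trans (by gcongr))
  refine ⟨hpow, ?_⟩
  convert abs_le_rpow_inv_of_pow_le (even_two_mul k) (by omega) hpow using 1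
  rw [← Real.rpow_mul hc.le]
  ring_nf

/-- **Spectral gap from quasirandomness and return probability.** If every nontrivial
complex representation of the finite group `G` has dimension at least `|G|^β`, and the
symmetric probability measure `μ` (whose support generates `G`) satisfies
`μ^n(1) ≤ |G|^(−(1−β/2))` for some even `n ≥ 1`, then every eigenvalue `α ≠ 1` of the
convolution operator `T_μ` satisfies `α^n ≤ |G|^(−β/2)`, hence `|α| ≤ |G|^(−β/(2n))`. -/
theorem spectral_gap_from_quasirandomness [Group G] [Fintype G] [DecidableEq G]
    (β : ℝ) (hβ0 : 0 < β) (hβ1 : β < 1)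
    (hrep : ∀ (V : Type) [AddCommGroup V] [Module ℂ V] [FiniteDimensional ℂ V]
      (ρ : Representation ℂ G V), ρ ≠ 1 →
        (Fintype.card G : ℝ) ^ β ≤ (Module.finrank ℂ V : ℝ))
    (μ : G → ℝ) (hnn : ∀ x, 0 ≤ μ x) (hsum : ∑ x : G, μ x = 1)
    (hsymm : ∀ x : G, μ x⁻¹ = μ x)
    (hgen : Subgroup.closure {x : G | μ x ≠ 0} = ⊤)
    (n : ℕ) (hn : 1 ≤ n) (hneven : Even n)
    (hreturn : convPow μ n 1 ≤ (Fintype.card G : ℝ) ^ (-(1 - β / 2)))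
    (M : Matrix G G ℝ) (hM : M = fun x y => μ (x * y⁻¹))
    (α : ℝ) (hα : α ≠ 1)
    (heig : ∃ f : G → ℝ, f ≠ 0 ∧ M.mulVec f = α • f) :
    α ^ n ≤ (Fintype.card G : ℝ) ^ (-(β / 2)) ∧
      |α| ≤ (Fintype.card G : ℝ) ^ (-(β / (2 * n))) :=
  spectral_gap_from_quasirandomness_general β hrep μ hsum hsymm n hn hneven hreturn M hM α hα heig
end
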